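/- If X ⊆ 2^ω has strong measure zero and G ⊆ 2^ω is comeager (its complement is meager), then there exists z ∈ 2^ω with X ⊆ G + z. -/

import Mathlib

open MeasureTheory Set Pointwise
open scoped ENNReal

/-- The Cantor space `2^ω = ℕ → ZMod 2`, with coordinatewise addition mod 2. -/
abbrev Cantor : Type := ℕ → ZMod 2

open Classical in
/-- The standard metric on the Cantor space: `d(x,y) = 2^{-min{n : x n ≠ y n}}`,
and `d(x,x) = 0`. -/
noncomputable def cdist (x y : Cantor) : ℝ :=
  if h : x = y then 0 else (2 : ℝ) ^ (-(Nat.find (Function.ne_iff.mp h) : ℤ))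

/-- The diameter of a subset of the Cantor space with respect to `cdist`. -/
noncomputable def cdiam (s : Set Cantor) : ℝ := sSup (Set.image2 cdist s s)

/-- `X ⊆ 2^ω` has strong measure zero if for every sequence `(εₙ)` of positive reals
there are sets `Xₙ` with `X = ⋃ₙ Xₙ` and `diam Xₙ < εₙ`. -/
def StrongMeasureZero (X : Set Cantor) : Prop :=
  ∀ ε : ℕ → ℝ, (∀ n, 0 < ε n) →
    ∃ Y : ℕ → Set Cantor, X = ⋃ n, Y n ∧ ∀ n, cdiam (Y n) < ε n

/-!
Write `G ⊇ ⋂ₖ Uₖ` with `Uₖ` dense open, and list the `Uₖ` as `Wₙ := U (unpair n).1`, so that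
each one occurs infinitely often. By compactness, for every level `l` there is a level `m` such
that every basic cylinder of length `l` contains a cylinder of length `m` inside `Wₙ`; this fixes
levels `L 0 < L 1 < ⋯` in advance. Strong measure zero then covers `X` by sets `Yₙ` of
diameter `< 2^{-L(n+1)}`, with infinitely many covers of `X` among them, so each `Yₙ` lies in a
cylinder of length `L (n+1)`. The digits of `z` are fixed block by block: those below `L (n+1)`
are chosen so that `Yₙ - z` lands in the cylinder of length `L (n+1)` inside `Wₙ`, which only
requires extending the digits below `L n` fixed so far.
-/

namespace PiNat

variable {E : ℕ → Type*}

theorem exists_forall_mem_cylinder_of_succ_mem {s : ℕ → ∀ n, E n} {L : ℕ → ℕ}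
    (hL : StrictMono L) (hs : ∀ k, s (k + 1) ∈ cylinder (s k) (L k)) :
    ∃ z, ∀ k, z ∈ cylinder (s k) (L k) := by
  have hcoh : ∀ k m, k ≤ m → s m ∈ cylinder (s k) (L k) := by
    intro k m hkm
    induction m, hkm using Nat.le_induction with
    | base => exact self_mem_cylinder _ _
    | succ m hkm ih =>
      rw [← mem_cylinder_iff_eq.1 ih]
      exact cylinder_anti _ (hL.monotone hkm) (hs m)
  refine ⟨fun i => s (i + 1) i, fun k i hi => ?_⟩
  have hi_lt : i < L (i + 1) := Nat.lt_of_succ_le (hL.id_le (i + 1))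
  calc s (i + 1) i = s (max k (i + 1)) i := (hcoh _ _ (le_max_right _ _) i hi_lt).symm
    _ = s k i := hcoh _ _ (le_max_left _ _) i hi

theorem exists_sub_mem_of_mem_cylinder [∀ n, AddGroup (E n)] {W : ℕ → Set (∀ n, E n)}
    {L : ℕ → ℕ} (hL : StrictMono L)
    (hW : ∀ n ρ, ∃ τ ∈ cylinder ρ (L n), cylinder τ (L (n + 1)) ⊆ W n)
    (a : ℕ → ∀ n, E n) :
    ∃ z, ∀ n, ∀ x ∈ cylinder (a n) (L (n + 1)), x - z ∈ W n := by
  choose τ hτ hτW using hW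
  -- `a k - s (k + 1) = τ k (a k - s k)`, and `τ k ρ` agrees with `ρ` below `L k`.
  let s : ℕ → ∀ n, E n := fun n => Nat.rec 0 (fun k sk => -τ k (a k - sk) + a k) n
  have hs : ∀ k, s (k + 1) = -τ k (a k - s k) + a k := fun _ => rfl
  obtain ⟨z, hz⟩ := exists_forall_mem_cylinder_of_succ_mem (s := s) hL fun k i hi => by
    simp [hs, hτ k _ i hi]
  refine ⟨z, fun n x hx => hτW n (a n - s n) fun i hi => ?_⟩
  simp [hx i hi, hz (n + 1) i hi, hs]

section Dense

variable [∀ n, TopologicalSpace (E n)] [∀ n, DiscreteTopology (E n)]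

theorem exists_cylinder_subset_of_dense {U : Set (∀ n, E n)} (hUo : IsOpen U) (hUd : Dense U)
    (ρ : ∀ n, E n) (l : ℕ) : ∃ τ ∈ cylinder ρ l, ∃ m, cylinder τ m ⊆ U := by
  obtain ⟨τ, hτU, hτρ⟩ := hUd.exists_mem_open (isOpen_cylinder E ρ l) ⟨ρ, self_mem_cylinder ρ l⟩
  obtain ⟨_, ⟨σ, m, rfl⟩, hτσ, hσU⟩ :=
    (isTopologicalBasis_cylinders E).exists_subset_of_mem_open hτU hUo
  exact ⟨τ, hτρ, m, mem_cylinder_iff_eq.1 hτσ ▸ hσU⟩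

theorem exists_uniform_cylinder_subset_of_dense [∀ n, CompactSpace (E n)]
    {U : Set (∀ n, E n)} (hUo : IsOpen U) (hUd : Dense U) (l : ℕ) :
    ∃ m, ∀ ρ : ∀ n, E n, ∃ τ ∈ cylinder ρ l, cylinder τ m ⊆ U := by
  choose τ hτ m hm using fun ρ => exists_cylinder_subset_of_dense hUo hUd ρ l
  obtain ⟨t, ht⟩ := isCompact_univ.elim_finite_subcover (fun ρ : ∀ n, E n => cylinder ρ l)
    (fun ρ => isOpen_cylinder E ρ l) fun ρ _ => mem_iUnion.2 ⟨ρ, self_mem_cylinder ρ l⟩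
  refine ⟨t.sup m, fun ρ => ?_⟩
  obtain ⟨σ, hσt, hρσ⟩ := mem_iUnion₂.1 (ht (mem_univ ρ))
  refine ⟨τ σ, ?_, (cylinder_anti _ (Finset.le_sup hσt)).trans (hm σ)⟩
  exact mem_cylinder_iff_eq.1 hρσ ▸ hτ σ

theorem exists_strictMono_cylinder_subset_of_dense [∀ n, CompactSpace (E n)]
    {W : ℕ → Set (∀ n, E n)} (hWo : ∀ n, IsOpen (W n)) (hWd : ∀ n, Dense (W n)) :
    ∃ L : ℕ → ℕ, StrictMono L ∧
      ∀ n ρ, ∃ τ ∈ cylinder ρ (L n), cylinder τ (L (n + 1)) ⊆ W n := by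
  choose m hm using fun n => exists_uniform_cylinder_subset_of_dense (hWo n) (hWd n)
  let L : ℕ → ℕ := fun n => Nat.rec 0 (fun k Lk => max (m k Lk) (Lk + 1)) n
  refine ⟨L, strictMono_nat_of_lt_succ fun n => ?_, fun n ρ => ?_⟩
  · exact (Nat.lt_succ_self _).trans_le (le_max_right _ _)
  · obtain ⟨τ, hτ, hτW⟩ := hm n (L n) ρ
    exact ⟨τ, hτ, (cylinder_anti τ (le_max_left _ _)).trans hτW⟩

end Dense

end PiNat

open PiNat

theorem exists_nat_isOpen_dense_iInter_subset_of_mem_residual {α : Type*} [TopologicalSpace α]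
    {s : Set α} (hs : s ∈ residual α) :
    ∃ U : ℕ → Set α, (∀ n, IsOpen (U n)) ∧ (∀ n, Dense (U n)) ∧ ⋂ n, U n ⊆ s := by
  obtain ⟨S, hSo, hSd, hSc, hSs⟩ := mem_residual_iff.1 hs
  obtain ⟨U, hU⟩ := (hSc.insert univ).exists_eq_range (insert_nonempty _ _)
  have hmem : ∀ n, U n = univ ∨ U n ∈ S := fun n => by
    rw [← mem_insert_iff, hU]
    exact mem_range_self n
  refine ⟨U, fun n => ?_, fun n => ?_, ?_⟩
  · rcases hmem n with h | h
    · exact h ▸ isOpen_univ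
    · exact hSo _ h
  · rcases hmem n with h | h
    · exact h ▸ dense_univ
    · exact hSd _ h
  · rw [← sInter_range, ← hU, sInter_insert]
    exact inter_subset_right.trans hSs

theorem cdist_eq_of_ne {x y : Cantor} (h : x ≠ y) : cdist x y = (1 / 2) ^ firstDiff x y := by
  rw [cdist, dif_neg h, firstDiff_def, dif_pos h, zpow_neg, zpow_natCast, one_div, inv_pow]
  congr

theorem cdist_le_one (x y : Cantor) : cdist x y ≤ 1 := by
  rcases eq_or_ne x y with rfl | h
  · simp [cdist]
  · rw [cdist_eq_of_ne h]
    exact pow_le_one₀ (by norm_num) (by norm_num)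

theorem mem_cylinder_of_cdist_lt {x y : Cantor} {l : ℕ} (h : cdist x y < (1 / 2) ^ l) :
    x ∈ cylinder y l := by
  rcases eq_or_ne x y with rfl | hne
  · exact self_mem_cylinder x l
  · rw [cdist_eq_of_ne hne, pow_lt_pow_iff_right_of_lt_one₀ (by norm_num) (by norm_num)] at h
    exact (mem_cylinder_iff_le_firstDiff hne l).2 h.le

theorem cdist_le_cdiam {Y : Set Cantor} {x y : Cantor} (hx : x ∈ Y) (hy : y ∈ Y) :
    cdist x y ≤ cdiam Y := by
  refine le_csSup ⟨1, ?_⟩ (mem_image2_of_mem hx hy)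
  rintro _ ⟨a, -, b, -, rfl⟩
  exact cdist_le_one a b

theorem exists_subset_cylinder_of_cdiam_lt {Y : Set Cantor} {l : ℕ} (h : cdiam Y < (1 / 2) ^ l) :
    ∃ a, Y ⊆ cylinder a l := by
  rcases Y.eq_empty_or_nonempty with rfl | ⟨a, ha⟩
  · exact ⟨0, empty_subset _⟩
  · exact ⟨a, fun x hx => mem_cylinder_of_cdist_lt ((cdist_le_cdiam hx ha).trans_lt h)⟩

theorem StrongMeasureZero.exists_cdiam_lt_forall_subset_iUnion_pair {X : Set Cantor}
    (hX : StrongMeasureZero X) {ε : ℕ → ℝ} (hε : ∀ n, 0 < ε n) :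
    ∃ Y : ℕ → Set Cantor, (∀ n, cdiam (Y n) < ε n) ∧ ∀ k, X ⊆ ⋃ i, Y (Nat.pair k i) := by
  choose Z hZX hZε using fun k => hX (fun i => ε (Nat.pair k i)) fun i => hε _
  refine ⟨fun n => Z n.unpair.1 n.unpair.2, fun n => ?_, fun k => ?_⟩
  · simpa using hZε n.unpair.1 n.unpair.2
  · simpa only [Nat.unpair_pair] using (hZX k).le

/-- A strong measure zero set can be covered by a translation of any comeager set. -/
theorem strongMeasureZero_subset_translate_of_comeager
    (X G : Set Cantor) (hX : StrongMeasureZero X) (hG : IsMeagre Gᶜ) :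
    ∃ z : Cantor, X ⊆ G + {z} := by
  have hG' : G ∈ residual Cantor := by rwa [IsMeagre, compl_compl] at hG
  obtain ⟨U, hUo, hUd, hUG⟩ := exists_nat_isOpen_dense_iInter_subset_of_mem_residual hG'
  obtain ⟨L, hL, hLU⟩ := exists_strictMono_cylinder_subset_of_dense
    (W := fun n => U n.unpair.1) (fun n => hUo _) fun n => hUd _
  obtain ⟨Y, hYdiam, hXY⟩ := hX.exists_cdiam_lt_forall_subset_iUnion_pair
    (ε := fun n => (1 / 2) ^ L (n + 1)) fun n => by positivity
  choose a ha using fun n => exists_subset_cylinder_of_cdiam_lt (hYdiam n)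
  obtain ⟨z, hz⟩ := exists_sub_mem_of_mem_cylinder hL hLU a
  refine ⟨z, fun x hx => ⟨x - z, hUG (mem_iInter.2 fun k => ?_), z, rfl, sub_add_cancel x z⟩⟩
  obtain ⟨i, hi⟩ := mem_iUnion.1 (hXY k hx)
  simpa using hz (Nat.pair k i) x (ha _ hi)
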